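/- There exist a set X and a (non-injective) self-map f : X → X such that BO(f) is a proper subset of Λ := ⋂_{n≥0} f^n(X), Λ is not completely invariant (i.e. f^{-1}(Λ) ⊄ Λ), f maps Λ into Λ, and the restriction f|_Λ : Λ → Λ is neither injective nor surjective. (An explicit example: X is the disjoint union of A = {(n,m) ∈ ℤ² : 0 ≤ m ≤ n} with two extra points p and q, with f(n,m) = (n,m−1) for m ≥ 1, f(n,0) = p, f(p) = q, f(q) = q; then BO(f) = {q} while Λ = {p,q}.) -/
import Mathlib

inductive Ex : Type where
  | q : Ex
  | p : Ex
  | a (n m : ℕ) : Ex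
deriving DecidableEq

def g : Ex → Ex
  | .q => .q
  | .p => .q
  | .a _ 0 => .p
  | .a n (m+1) => if m + 1 ≤ n then .a n m else .a n (m+1)

lemma g_eq_p {x : Ex} (h : g x = .p) : ∃ n, x = .a n 0 := by
  match x with
  | .q => simp [g] at h
  | .p => simp [g] at h
  | .a n 0 => exact ⟨n, rfl⟩
  | .a n (m+1) =>
    simp only [g] at h
    split at h <;> simp at h

lemma g_iter_a : ∀ (k : ℕ) (x : Ex) (n m : ℕ), g^[k] x = .a n m → m ≤ n → m + k ≤ n := by
  intro k
  induction k with
  | zero => intro x n m h hm; simpa using hm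
  | succ k ih =>
    intro x n m h hm
    rw [Function.iterate_succ_apply'] at h
    match hy : g^[k] x with
    | .q => rw [hy] at h; simp [g] at h
    | .p => rw [hy] at h; simp [g] at h
    | .a n' 0 => rw [hy] at h; simp [g] at h
    | .a n' (m'+1) =>
      rw [hy] at h
      simp only [g] at h
      split at h
      · rename_i hle
        injection h with h1 h2
        have := ih x n' (m'+1) hy hle
        omega
      · rename_i hgt
        injection h with h1 h2
        omega

lemma g_iter_chain : ∀ j n : ℕ, j ≤ n → g^[j] (.a n n) = .a n (n - j) := by
  intro j
  induction j with
  | zero => intro n _; simp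
  | succ j ih =>
    intro n hj
    rw [Function.iterate_succ_apply', ih n (by omega)]
    have h1 : n - j = (n - (j+1)) + 1 := by omega
    rw [h1]
    simp only [g]
    rw [if_pos (by omega)]

lemma q_fixed : g .q = .q := rfl

lemma p_mem_range : ∀ k : ℕ, ∃ x, g^[k] x = .p := by
  intro k
  match k with
  | 0 => exact ⟨.p, rfl⟩
  | (j+1) =>
    refine ⟨.a j j, ?_⟩
    rw [Function.iterate_succ_apply', g_iter_chain j j le_rfl]
    simp [g]

/-- There is a (non-injective) self-map `f` of a set `X` for which the set of starting
points of backward orbits is a proper subset of `Λ = ⋂ₙ f^n(X)`, `Λ` is not completely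
invariant, `f` maps `Λ` into `Λ`, and `f|_Λ : Λ → Λ` is neither injective nor
surjective. -/
theorem stmt_2 : ∃ (X : Type) (f : X → X),
    {x : X | ∃ z : ℕ → X, (∀ n, f (z (n + 1)) = z n) ∧ z 0 = x} ⊂
      (⋂ n : ℕ, Set.range f^[n]) ∧
    ¬ (f ⁻¹' (⋂ n : ℕ, Set.range f^[n]) ⊆ (⋂ n : ℕ, Set.range f^[n])) ∧
    f '' (⋂ n : ℕ, Set.range f^[n]) ⊆ (⋂ n : ℕ, Set.range f^[n]) ∧
    ¬ Set.InjOn f (⋂ n : ℕ, Set.range f^[n]) ∧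
    ¬ Set.SurjOn f (⋂ n : ℕ, Set.range f^[n]) (⋂ n : ℕ, Set.range f^[n]) := by
  refine ⟨Ex, g, ?_, ?_, ?_, ?_, ?_⟩
  · -- BO ⊊ Λ
    constructor
    · rintro x ⟨z, hz, hz0⟩
      rw [Set.mem_iInter]
      intro n
      refine ⟨z n, ?_⟩
      rw [← hz0]
      clear hz0
      induction n with
      | zero => rfl
      | succ n ih => rw [Function.iterate_succ_apply, hz n, ih]
    · intro hsub
      have hpΛ : Ex.p ∈ ⋂ n : ℕ, Set.range g^[n] := by
        rw [Set.mem_iInter]; intro n; exact p_mem_range n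
      obtain ⟨z, hz, hz0⟩ := hsub hpΛ
      have h1 : g (z 1) = .p := by rw [hz 0, hz0]
      obtain ⟨n, hn⟩ := g_eq_p h1
      -- backward orbit from a n 0
      have horb : ∀ k : ℕ, g^[k] (z (k + 1)) = .a n 0 := by
        intro k
        induction k with
        | zero => simpa using hn
        | succ k ih => rw [Function.iterate_succ_apply, hz (k+1), ih]
      have := g_iter_a (n+1) (z (n+2)) n 0 (horb (n+1)) (Nat.zero_le n)
      omega
  · -- not completely invariant
    intro hsub
    have h00 : Ex.a 0 0 ∈ g ⁻¹' (⋂ n : ℕ, Set.range g^[n]) := by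
      have : g (.a 0 0) = .p := rfl
      simp only [Set.mem_preimage, this, Set.mem_iInter]
      intro n; exact p_mem_range n
    have := hsub h00
    rw [Set.mem_iInter] at this
    obtain ⟨x, hx⟩ := this 1
    have := g_iter_a 1 x 0 0 (by simpa using hx) le_rfl
    omega
  · -- f '' Λ ⊆ Λ (general fact)
    rintro y ⟨x, hx, rfl⟩
    rw [Set.mem_iInter] at hx ⊢
    intro n
    obtain ⟨w, hw⟩ := hx n
    exact ⟨g w, by rw [← Function.iterate_succ_apply, Function.iterate_succ_apply', hw]⟩
  · -- not InjOn
    intro hinj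
    have hpΛ : Ex.p ∈ ⋂ n : ℕ, Set.range g^[n] := by
      rw [Set.mem_iInter]; intro n; exact p_mem_range n
    have hqΛ : Ex.q ∈ ⋂ n : ℕ, Set.range g^[n] := by
      rw [Set.mem_iInter]; intro n
      exact ⟨.q, Function.iterate_fixed q_fixed n⟩
    have : Ex.p = Ex.q := hinj hpΛ hqΛ rfl
    simp at this
  · -- not SurjOn
    intro hsurj
    have hpΛ : Ex.p ∈ ⋂ n : ℕ, Set.range g^[n] := by
      rw [Set.mem_iInter]; intro n; exact p_mem_range n
    obtain ⟨x, hxΛ, hx⟩ := hsurj hpΛ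
    obtain ⟨n, rfl⟩ := g_eq_p hx
    rw [Set.mem_iInter] at hxΛ
    obtain ⟨w, hw⟩ := hxΛ (n+1)
    have := g_iter_a (n+1) w n 0 hw (Nat.zero_le n)
    omega
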